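/- Let U be a unitary operator on a Hilbert space H, let (P_i)_{i∈I} be orthogonal projections on H summing to the identity, and for x ∈ {0,1}^I let O_x = ∑_i (−1)^{x_i} P_i. Then for any unit vectors ψ, φ ∈ H and any x, y ∈ {0,1}^I: |⟨ψ|φ⟩ − ⟨U O_x ψ | U O_y φ⟩| ≤ 2 ∑_{i : x_i ≠ y_i} ‖P_i ψ‖·‖P_i φ‖. -/

import Mathlib

/-! Decompose both inner products along the projections: since `∑ P_i = 1` with the `P_i`
self-adjoint idempotents, the `P_i` are mutually orthogonal, so
`⟪O_x ψ, O_y φ⟫ = ∑_i (-1)^{x_i + y_i} ⟪P_i ψ, P_i φ⟫` while `⟪ψ, φ⟫ = ∑_i ⟪P_i ψ, P_i φ⟫`.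
The terms with `x_i = y_i` cancel, the others contribute `2 ⟪P_i ψ, P_i φ⟫`, and `U` preserves
inner products; Cauchy–Schwarz finishes. -/

open ComplexConjugate

section Projections

variable {𝕜 E ι : Type*} [RCLike 𝕜] [NormedAddCommGroup E] [InnerProductSpace 𝕜 E]
  [CompleteSpace E]

theorem IsStarProjection.apply_apply {p : E →L[𝕜] E} (hp : IsStarProjection p) (v : E) :
    p (p v) = p v := by
  rw [← mul_apply_eq_comp, hp.isIdempotentElem.eq]

theorem IsStarProjection.inner_apply_apply {p : E →L[𝕜] E} (hp : IsStarProjection p)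
    (u v : E) : inner 𝕜 (p u) (p v) = inner 𝕜 u (p v) := by
  rw [← ContinuousLinearMap.adjoint_inner_right, hp.isSelfAdjoint.adjoint_eq, hp.apply_apply]

variable [Fintype ι] {P : ι → E →L[𝕜] E}

theorem inner_eq_sum_inner_apply_apply (hP : ∀ i, IsStarProjection (P i)) (hsum : ∑ i, P i = 1)
    (u v : E) : inner 𝕜 u v = ∑ i, inner 𝕜 (P i u) (P i v) := by
  conv_lhs => rw [← one_apply_eq_self (F := E →L[𝕜] E) v, ← hsum, sum_apply, inner_sum]
  simp only [(hP _).inner_apply_apply]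

theorem sum_norm_sq_apply_eq_norm_sq (hP : ∀ i, IsStarProjection (P i)) (hsum : ∑ i, P i = 1)
    (w : E) : ∑ i, ‖P i w‖ ^ 2 = ‖w‖ ^ 2 := by
  simp only [← inner_self_eq_norm_sq (𝕜 := 𝕜), inner_eq_sum_inner_apply_apply hP hsum w w,
    map_sum]

/-- Pythagoras gives `∑ ‖P_k w‖² = ‖w‖²`, and for `w = P_j v` the `j`-th term alone is `‖w‖²`. -/
theorem apply_apply_eq_zero_of_ne (hP : ∀ i, IsStarProjection (P i)) (hsum : ∑ i, P i = 1)
    {i j : ι} (hij : i ≠ j) (v : E) : P i (P j v) = 0 := by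
  classical
  set w := P j v
  have hw : P j w = w := (hP j).apply_apply v
  have hrest : ∑ k ∈ Finset.univ.erase j, ‖P k w‖ ^ 2 = 0 := by
    have := sum_norm_sq_apply_eq_norm_sq hP hsum w
    rw [← Finset.add_sum_erase _ _ (Finset.mem_univ j), hw] at this
    linarith
  have hi := (Finset.sum_eq_zero_iff_of_nonneg fun k _ => sq_nonneg ‖P k w‖).mp hrest i
    (Finset.mem_erase.mpr ⟨hij, Finset.mem_univ i⟩)
  simpa using hi

theorem inner_sum_apply_sum_apply (hP : ∀ i, IsStarProjection (P i)) (hsum : ∑ i, P i = 1)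
    (a b : ι → E) :
    inner 𝕜 (∑ i, P i (a i)) (∑ i, P i (b i)) = ∑ i, inner 𝕜 (P i (a i)) (P i (b i)) := by
  rw [sum_inner]
  refine Finset.sum_congr rfl fun i _ => ?_
  rw [inner_sum, Finset.sum_eq_single i _ (by simp)]
  intro j _ hji
  rw [← ContinuousLinearMap.adjoint_inner_right, (hP i).isSelfAdjoint.adjoint_eq,
    apply_apply_eq_zero_of_ne hP hsum hji.symm, inner_zero_right]

theorem inner_sum_smul_apply_sum_smul_apply (hP : ∀ i, IsStarProjection (P i))
    (hsum : ∑ i, P i = 1) (c d : ι → 𝕜) (u v : E) :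
    inner 𝕜 (∑ i, c i • P i u) (∑ i, d i • P i v) =
      ∑ i, conj (c i) * d i * inner 𝕜 (P i u) (P i v) := by
  simp only [← map_smul, inner_sum_apply_sum_apply hP hsum]
  refine Finset.sum_congr rfl fun i _ => ?_
  rw [map_smul, map_smul, inner_smul_left, inner_smul_right, mul_assoc]

theorem norm_inner_sub_inner_sum_smul_apply_le (hP : ∀ i, IsStarProjection (P i))
    (hsum : ∑ i, P i = 1) (c d : ι → 𝕜) (u v : E) :
    ‖inner 𝕜 u v - inner 𝕜 (∑ i, c i • P i u) (∑ i, d i • P i v)‖ ≤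
      ∑ i, ‖1 - conj (c i) * d i‖ * (‖P i u‖ * ‖P i v‖) := by
  rw [inner_eq_sum_inner_apply_apply hP hsum u v, inner_sum_smul_apply_sum_smul_apply hP hsum,
    ← Finset.sum_sub_distrib]
  refine (norm_sum_le _ _).trans (Finset.sum_le_sum fun i _ => ?_)
  rw [← one_sub_mul, norm_mul]
  gcongr
  exact norm_inner_le_norm _ _

end Projections

theorem norm_one_sub_conj_sign_mul_sign (a b : Bool) :
    ‖1 - conj (if a then (-1 : ℂ) else 1) * (if b then -1 else 1)‖ = if a ≠ b then 2 else 0 := by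
  cases a <;> cases b <;> norm_num

theorem query_progress_bound
    {H : Type*} [NormedAddCommGroup H] [InnerProductSpace ℂ H] [CompleteSpace H]
    {ι : Type*} [Fintype ι] (P : ι → H →L[ℂ] H)
    (hproj : ∀ i, IsIdempotentElem (P i)) (hsa : ∀ i, IsSelfAdjoint (P i))
    (hsum : ∑ i, P i = 1)
    (U : H ≃ₗᵢ[ℂ] H)
    (x y : ι → Bool)
    (ψ φ : H) :
    ‖(inner ℂ ψ φ : ℂ) -
        (inner ℂ (U (∑ i, ((if x i then (-1 : ℂ) else 1) • P i ψ)))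
               (U (∑ i, ((if y i then (-1 : ℂ) else 1) • P i φ))) : ℂ)‖ ≤
      2 * ∑ i ∈ Finset.univ.filter (fun i => x i ≠ y i), ‖P i ψ‖ * ‖P i φ‖ := by
  have hP : ∀ i, IsStarProjection (P i) := fun i => ⟨hproj i, hsa i⟩
  rw [LinearIsometryEquiv.inner_map_map]
  refine (norm_inner_sub_inner_sum_smul_apply_le hP hsum _ _ ψ φ).trans_eq ?_
  simp only [norm_one_sub_conj_sign_mul_sign, ite_mul, zero_mul, ← Finset.sum_filter,
    Finset.mul_sum]
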